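/- Let m > M ≥ 1 and define the expected overlap proportion T(m, M) = (E[Σ_{j=1}^M min(α¹_j, α²_j)] + M)/m, where α¹, α² are the type-count vectors of two independent uniformly random assignments of m−M points to M types. Then T(m, M) ≥ 1 − √(2(m−M)(M−1))/(2m). Consequently, for every fixed M, T(m, M) → 1 as m → ∞. -/

import Mathlib

open MeasureTheory Filter

/-- The uniform probability measure on a finite type: normalized counting measure. -/
noncomputable def unifMeasure (Ω : Type*) [Fintype Ω] [MeasurableSpace Ω] :
    Measure Ω :=
  (Fintype.card Ω : ENNReal)⁻¹ • Measure.count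

/-- `typeCount τ j = #{i : τ i = j}`, the number of points assigned to type `j`. -/
def typeCount {n M : ℕ} (τ : Fin n → Fin M) (j : Fin M) : ℕ :=
  (Finset.univ.filter fun i => τ i = j).card

/-- The expected overlap proportion `T(m, M) = (E[Σ_j min(α¹_j, α²_j)] + M)/m`,
where `α¹, α²` are the type-count vectors of two independent uniformly random
assignments of `m − M` points to `M` types. -/
noncomputable def Texp (m M : ℕ) : ℝ :=
  ((∫ ω : (Fin (m - M) → Fin M) × (Fin (m - M) → Fin M),
      (∑ j : Fin M, (min (typeCount ω.1 j) (typeCount ω.2 j) : ℝ))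
      ∂(unifMeasure ((Fin (m - M) → Fin M) × (Fin (m - M) → Fin M)))) + M) / m

open Finset

section Aux

lemma integral_unif {Ω : Type*} [Fintype Ω] [MeasurableSpace Ω] [MeasurableSingletonClass Ω]
    (f : Ω → ℝ) :
    ∫ ω, f ω ∂(unifMeasure Ω) = (Fintype.card Ω : ℝ)⁻¹ * ∑ ω, f ω := by
  rw [unifMeasure, integral_smul_measure, integral_countable' Integrable.of_finite,
    tsum_fintype]
  simp [Measure.count_singleton, smul_eq_mul]

lemma typeCount_eq_sum {n M : ℕ} (τ : Fin n → Fin M) (j : Fin M) :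
    (typeCount τ j : ℝ) = ∑ i, if τ i = j then (1:ℝ) else 0 := by
  rw [typeCount, Finset.card_filter]; push_cast; simp

lemma sum_typeCount {n M : ℕ} (τ : Fin n → Fin M) :
    ∑ j, (typeCount τ j : ℝ) = n := by
  simp only [typeCount_eq_sum]
  rw [Finset.sum_comm]
  simp

lemma typeCount_cons {n M : ℕ} (x : Fin M) (τ : Fin n → Fin M) (j : Fin M) :
    (typeCount (Fin.cons x τ) j : ℝ) = (if x = j then 1 else 0) + typeCount τ j := by
  rw [typeCount_eq_sum, typeCount_eq_sum, Fin.sum_univ_succ]; simp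

lemma sum_fun_succ {n M : ℕ} (F : (Fin (n+1) → Fin M) → ℝ) :
    ∑ τ : Fin (n+1) → Fin M, F τ
      = ∑ x : Fin M, ∑ τ : Fin n → Fin M, F (Fin.cons x τ) := by
  rw [← (Fin.consEquiv (fun _ : Fin (n+1) => Fin M)).sum_comp F, Fintype.sum_prod_type]
  rfl

lemma sum_ite_mul_const (M : ℕ) (j : Fin M) (c : ℝ) :
    ∑ x : Fin M, (if x = j then (1:ℝ) else 0) * c = c := by
  rw [← Finset.sum_mul, Finset.sum_ite_eq' univ j]
  simp

lemma S1' (M : ℕ) (j : Fin M) (n : ℕ) :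
    (M:ℝ) * ∑ τ : Fin n → Fin M, (typeCount τ j : ℝ) = n * (M:ℝ)^n := by
  induction n with
  | zero => simp [typeCount]
  | succ n ih =>
    rw [sum_fun_succ]
    simp only [typeCount_cons]
    have expand : ∀ x : Fin M, ∑ τ : Fin n → Fin M,
        ((if x = j then (1:ℝ) else 0) + typeCount τ j)
        = (if x = j then (1:ℝ) else 0) * (M:ℝ)^n
          + ∑ τ : Fin n → Fin M, (typeCount τ j : ℝ) := by
      intro x
      rw [Finset.sum_add_distrib, Finset.sum_const, card_univ]
      simp [mul_comm]
    rw [Finset.sum_congr rfl fun x _ => expand x, Finset.sum_add_distrib,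
      sum_ite_mul_const, Finset.sum_const, card_univ, Fintype.card_fin,
      nsmul_eq_mul]
    push_cast
    linear_combination (M:ℝ) * ih

lemma S2' (M : ℕ) (j : Fin M) (n : ℕ) :
    (M:ℝ)^2 * ∑ τ : Fin n → Fin M, (typeCount τ j : ℝ)^2
      = n * (M:ℝ)^(n+1) + n * ((n:ℝ) - 1) * (M:ℝ)^n := by
  induction n with
  | zero => simp [typeCount]
  | succ n ih =>
    have h1 := S1' M j n
    rw [sum_fun_succ]
    simp only [typeCount_cons]
    have expand : ∀ x : Fin M, ∑ τ : Fin n → Fin M,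
        ((if x = j then (1:ℝ) else 0) + typeCount τ j)^2
        = (if x = j then (1:ℝ) else 0)
            * ((M:ℝ)^n + 2 * ∑ τ : Fin n → Fin M, (typeCount τ j : ℝ))
          + ∑ τ : Fin n → Fin M, (typeCount τ j : ℝ)^2 := by
      intro x
      by_cases hx : x = j <;>
        simp [hx, add_sq, Finset.sum_add_distrib, Finset.mul_sum, Finset.sum_const,
          card_univ] <;> ring
    rw [Finset.sum_congr rfl fun x _ => expand x, Finset.sum_add_distrib,
      sum_ite_mul_const, Finset.sum_const, card_univ, Fintype.card_fin,
      nsmul_eq_mul]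
    push_cast
    linear_combination (M:ℝ) * ih + 2 * (M:ℝ) * h1

lemma sum_sq_diff (M n : ℕ) (j : Fin M) :
    (M:ℝ)^2 * ∑ ω : (Fin n → Fin M) × (Fin n → Fin M),
      ((typeCount ω.1 j : ℝ) - typeCount ω.2 j)^2
    = 2 * n * ((M:ℝ) - 1) * ((M:ℝ)^n)^2 := by
  have hcard : ((Finset.univ : Finset (Fin n → Fin M)).card : ℝ) = (M:ℝ)^n := by simp
  set A := ∑ τ : Fin n → Fin M, (typeCount τ j : ℝ) with hA
  set B := ∑ τ : Fin n → Fin M, (typeCount τ j : ℝ)^2 with hB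
  have key : ∑ ω : (Fin n → Fin M) × (Fin n → Fin M),
      ((typeCount ω.1 j : ℝ) - typeCount ω.2 j)^2
      = ∑ ω : (Fin n → Fin M) × (Fin n → Fin M),
        ((typeCount ω.1 j : ℝ)^2 + (typeCount ω.2 j : ℝ)^2
          - 2 * ((typeCount ω.1 j : ℝ) * (typeCount ω.2 j : ℝ))) :=
    Finset.sum_congr rfl fun _ _ => by ring
  have ha : ∑ ω : (Fin n → Fin M) × (Fin n → Fin M), (typeCount ω.1 j : ℝ)^2
      = (M:ℝ)^n * B := by
    rw [Fintype.sum_prod_type]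
    show ∑ σ : Fin n → Fin M, ∑ _τ : Fin n → Fin M, (typeCount σ j : ℝ)^2 = _
    simp only [Finset.sum_const, card_univ, nsmul_eq_mul]
    rw [← Finset.mul_sum, ← hB]
    norm_num
  have hb : ∑ ω : (Fin n → Fin M) × (Fin n → Fin M), (typeCount ω.2 j : ℝ)^2
      = (M:ℝ)^n * B := by
    rw [Fintype.sum_prod_type]
    show ∑ _σ : Fin n → Fin M, ∑ τ : Fin n → Fin M, (typeCount τ j : ℝ)^2 = _
    rw [Finset.sum_const, nsmul_eq_mul, hcard]
  have hc : ∑ ω : (Fin n → Fin M) × (Fin n → Fin M),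
      (typeCount ω.1 j : ℝ) * (typeCount ω.2 j : ℝ) = A * A := by
    rw [Fintype.sum_prod_type]
    show ∑ σ : Fin n → Fin M, ∑ τ : Fin n → Fin M, (typeCount σ j : ℝ) * (typeCount τ j : ℝ) = _
    rw [Finset.sum_congr rfl fun σ _ =>
      (Finset.mul_sum Finset.univ (fun τ => (typeCount τ j : ℝ)) ((typeCount σ j : ℝ))).symm]
    rw [← Finset.sum_mul, ← hA]
  rw [key, Finset.sum_sub_distrib, Finset.sum_add_distrib, ha, hb, ← Finset.mul_sum, hc]
  have h1 := S1' M j n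
  have h2 := S2' M j n
  linear_combination 2 * (M:ℝ)^n * h2 - 2 * ((M:ℝ) * A + n * (M:ℝ)^n) * h1

lemma sum_abs_le (M n : ℕ) (hM : 1 ≤ M) (j : Fin M) :
    ∑ ω : (Fin n → Fin M) × (Fin n → Fin M),
      |(typeCount ω.1 j : ℝ) - typeCount ω.2 j|
    ≤ ((M:ℝ)^n)^2 / M * Real.sqrt (2 * n * ((M:ℝ) - 1)) := by
  have hMpos : (0:ℝ) < M := by exact_mod_cast hM
  have hMn : (0:ℝ) < (M:ℝ)^n := pow_pos hMpos n
  have hS : (0:ℝ) ≤ ∑ ω : (Fin n → Fin M) × (Fin n → Fin M),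
      |(typeCount ω.1 j : ℝ) - typeCount ω.2 j| :=
    Finset.sum_nonneg fun _ _ => abs_nonneg _
  have hcard : ((Finset.univ : Finset ((Fin n → Fin M) × (Fin n → Fin M))).card : ℝ)
      = ((M:ℝ)^n)^2 := by simp [sq]
  have hcs := Finset.sum_mul_sq_le_sq_mul_sq Finset.univ
    (fun ω : (Fin n → Fin M) × (Fin n → Fin M) =>
      |(typeCount ω.1 j : ℝ) - typeCount ω.2 j|) (fun _ => (1:ℝ))
  simp only [mul_one, one_pow, Finset.sum_const, nsmul_eq_mul] at hcs
  rw [hcard] at hcs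
  simp only [sq_abs] at hcs
  have hsq := sum_sq_diff M n j
  have hquot : ∑ ω : (Fin n → Fin M) × (Fin n → Fin M),
      ((typeCount ω.1 j : ℝ) - typeCount ω.2 j)^2
      = 2 * n * ((M:ℝ) - 1) * ((M:ℝ)^n)^2 / (M:ℝ)^2 := by
    field_simp
    linarith [hsq]
  rw [hquot] at hcs
  have hnn : (0:ℝ) ≤ 2 * n * ((M:ℝ) - 1) := by
    have h1M : (1:ℝ) ≤ M := by exact_mod_cast hM
    have := Nat.cast_nonneg (α := ℝ) n
    nlinarith
  calc ∑ ω : (Fin n → Fin M) × (Fin n → Fin M),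
        |(typeCount ω.1 j : ℝ) - typeCount ω.2 j|
      = Real.sqrt ((∑ ω : (Fin n → Fin M) × (Fin n → Fin M),
          |(typeCount ω.1 j : ℝ) - typeCount ω.2 j|)^2) := (Real.sqrt_sq hS).symm
    _ ≤ Real.sqrt (2 * n * ((M:ℝ) - 1) * (((M:ℝ)^n)^2 / M)^2) := by
        apply Real.sqrt_le_sqrt
        calc _ ≤ 2 * ↑n * ((M:ℝ) - 1) * (↑M ^ n) ^ 2 / ↑M ^ 2 * ((M:ℝ) ^ n) ^ 2 := hcs
          _ = 2 * n * ((M:ℝ) - 1) * (((M:ℝ)^n)^2 / M)^2 := by ring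
    _ = ((M:ℝ)^n)^2 / M * Real.sqrt (2 * n * ((M:ℝ) - 1)) := by
        rw [Real.sqrt_mul hnn, Real.sqrt_sq (by positivity)]
        ring

lemma min_real (a b : ℝ) : min a b = (a + b - |a - b|)/2 := by
  rcases le_total a b with h | h
  · rw [min_eq_left h, abs_of_nonpos (by linarith)]; ring
  · rw [min_eq_right h, abs_of_nonneg (by linarith)]; ring

lemma sum_min_pointwise {M n : ℕ} (ω : (Fin n → Fin M) × (Fin n → Fin M)) :
    ∑ j : Fin M, (min (typeCount ω.1 j) (typeCount ω.2 j) : ℝ)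
    = n - (∑ j : Fin M, |(typeCount ω.1 j : ℝ) - typeCount ω.2 j|) / 2 := by
  have : ∀ j : Fin M, (min (typeCount ω.1 j) (typeCount ω.2 j) : ℝ)
      = ((typeCount ω.1 j : ℝ) + (typeCount ω.2 j : ℝ)
          - |(typeCount ω.1 j : ℝ) - typeCount ω.2 j|)/2 :=
    fun j => min_real _ _
  rw [Finset.sum_congr rfl fun j _ => this j]
  rw [show (fun j : Fin M => ((typeCount ω.1 j : ℝ) + (typeCount ω.2 j : ℝ)
      - |(typeCount ω.1 j : ℝ) - typeCount ω.2 j|)/2)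
    = fun j : Fin M => ((typeCount ω.1 j : ℝ) + (typeCount ω.2 j : ℝ)
      - |(typeCount ω.1 j : ℝ) - typeCount ω.2 j|) * (1/2) from by
      funext j; ring]
  rw [← Finset.sum_mul, Finset.sum_sub_distrib, Finset.sum_add_distrib,
    sum_typeCount, sum_typeCount]
  ring

lemma sum_min_lower (M n : ℕ) (hM : 1 ≤ M) :
    ((M:ℝ)^n)^2 * ((n:ℝ) - Real.sqrt (2 * n * ((M:ℝ) - 1)) / 2)
    ≤ ∑ ω : (Fin n → Fin M) × (Fin n → Fin M),
        ∑ j : Fin M, (min (typeCount ω.1 j) (typeCount ω.2 j) : ℝ) := by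
  have hcard : ((Finset.univ : Finset ((Fin n → Fin M) × (Fin n → Fin M))).card : ℝ)
      = ((M:ℝ)^n)^2 := by simp [sq]
  rw [Finset.sum_congr rfl fun ω _ => sum_min_pointwise ω]
  rw [Finset.sum_sub_distrib, Finset.sum_const, nsmul_eq_mul, hcard]
  have hswap : ∑ ω : (Fin n → Fin M) × (Fin n → Fin M),
      (∑ j : Fin M, |(typeCount ω.1 j : ℝ) - typeCount ω.2 j|) / 2
      = (∑ j : Fin M, ∑ ω : (Fin n → Fin M) × (Fin n → Fin M),
          |(typeCount ω.1 j : ℝ) - typeCount ω.2 j|) / 2 := by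
    rw [Finset.sum_comm]
    rw [← Finset.sum_div]
  rw [hswap]
  have hbound : ∑ j : Fin M, ∑ ω : (Fin n → Fin M) × (Fin n → Fin M),
      |(typeCount ω.1 j : ℝ) - typeCount ω.2 j|
      ≤ ((M:ℝ)^n)^2 * Real.sqrt (2 * n * ((M:ℝ) - 1)) := by
    calc _ ≤ ∑ _j : Fin M, ((M:ℝ)^n)^2 / M * Real.sqrt (2 * n * ((M:ℝ) - 1)) :=
          Finset.sum_le_sum fun j _ => sum_abs_le M n hM j
      _ = M * (((M:ℝ)^n)^2 / M * Real.sqrt (2 * n * ((M:ℝ) - 1))) := by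
          rw [Finset.sum_const, card_univ, Fintype.card_fin, nsmul_eq_mul]
      _ = ((M:ℝ)^n)^2 * Real.sqrt (2 * n * ((M:ℝ) - 1)) := by
          have hMpos : (0:ℝ) < M := by exact_mod_cast hM
          field_simp
  have hring : ((M:ℝ)^n)^2 * ((n:ℝ) - Real.sqrt (2 * n * ((M:ℝ) - 1)) / 2)
      = ((M:ℝ)^n)^2 * (n:ℝ) - ((M:ℝ)^n)^2 * Real.sqrt (2 * n * ((M:ℝ) - 1)) / 2 := by
    ring
  rw [hring]
  linarith


lemma sum_min_upper (M n : ℕ) :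
    ∑ ω : (Fin n → Fin M) × (Fin n → Fin M),
        ∑ j : Fin M, (min (typeCount ω.1 j) (typeCount ω.2 j) : ℝ)
    ≤ ((M:ℝ)^n)^2 * n := by
  have hcard : ((Finset.univ : Finset ((Fin n → Fin M) × (Fin n → Fin M))).card : ℝ)
      = ((M:ℝ)^n)^2 := by simp [sq]
  calc ∑ ω : (Fin n → Fin M) × (Fin n → Fin M),
        ∑ j : Fin M, (min (typeCount ω.1 j) (typeCount ω.2 j) : ℝ)
      ≤ ∑ _ω : (Fin n → Fin M) × (Fin n → Fin M), (n:ℝ) := by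
        refine Finset.sum_le_sum fun ω _ => ?_
        calc ∑ j : Fin M, (min (typeCount ω.1 j) (typeCount ω.2 j) : ℝ)
            ≤ ∑ j : Fin M, (typeCount ω.1 j : ℝ) :=
              Finset.sum_le_sum fun j _ => min_le_left _ _
          _ = n := sum_typeCount _
    _ = ((M:ℝ)^n)^2 * n := by
        rw [Finset.sum_const, nsmul_eq_mul, hcard]

lemma Texp_eq (m M : ℕ) :
    Texp m M
      = (((Fintype.card ((Fin (m - M) → Fin M) × (Fin (m - M) → Fin M)) : ℝ))⁻¹ *
          ∑ ω : (Fin (m - M) → Fin M) × (Fin (m - M) → Fin M),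
            ∑ j : Fin M, (min (typeCount ω.1 j) (typeCount ω.2 j) : ℝ) + M) / m := by
  rw [Texp, integral_unif]

lemma Texp_lb (m M : ℕ) (hM : 1 ≤ M) (hmM : M < m) :
    Texp m M ≥ 1 - Real.sqrt (2 * ((m : ℝ) - M) * ((M : ℝ) - 1)) / (2 * m) := by
  set n := m - M with hn
  have hncast : (n:ℝ) = (m:ℝ) - M := by
    rw [hn, Nat.cast_sub hmM.le]
  have hm0 : (0:ℝ) < m := by
    have : 0 < m := lt_of_le_of_lt (Nat.zero_le M) hmM
    exact_mod_cast this
  have hMpos : (0:ℝ) < M := by exact_mod_cast hM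
  have hMn : (0:ℝ) < ((M:ℝ)^n)^2 := by positivity
  have hcardF : (Fintype.card ((Fin n → Fin M) × (Fin n → Fin M)) : ℝ) = ((M:ℝ)^n)^2 := by
    simp [sq]
  have hI : (n:ℝ) - Real.sqrt (2 * n * ((M:ℝ) - 1)) / 2
      ≤ (Fintype.card ((Fin n → Fin M) × (Fin n → Fin M)) : ℝ)⁻¹ *
          ∑ ω : (Fin n → Fin M) × (Fin n → Fin M),
            ∑ j : Fin M, (min (typeCount ω.1 j) (typeCount ω.2 j) : ℝ) := by
    rw [hcardF, inv_mul_eq_div, le_div_iff₀ hMn]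
    calc ((n:ℝ) - Real.sqrt (2 * n * ((M:ℝ) - 1)) / 2) * ((M:ℝ)^n)^2
        = ((M:ℝ)^n)^2 * ((n:ℝ) - Real.sqrt (2 * n * ((M:ℝ) - 1)) / 2) := by ring
      _ ≤ _ := sum_min_lower M n hM
  rw [ge_iff_le, Texp_eq]
  rw [le_div_iff₀ hm0]
  have harg : 2 * ((m:ℝ) - M) * ((M:ℝ) - 1) = 2 * (n:ℝ) * ((M:ℝ) - 1) := by
    rw [hncast]
  rw [harg]
  have hexp : (1 - Real.sqrt (2 * (n:ℝ) * ((M:ℝ) - 1)) / (2 * m)) * m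
      = (m:ℝ) - Real.sqrt (2 * (n:ℝ) * ((M:ℝ) - 1)) / 2 := by
    field_simp
  rw [hexp]
  have hnm : (n:ℝ) + M = m := by rw [hncast]; ring
  linarith

lemma Texp_ub (m M : ℕ) (hM : 1 ≤ M) (hmM : M < m) : Texp m M ≤ 1 := by
  set n := m - M with hn
  have hncast : (n:ℝ) = (m:ℝ) - M := by
    rw [hn, Nat.cast_sub hmM.le]
  have hm0 : (0:ℝ) < m := by
    have : 0 < m := lt_of_le_of_lt (Nat.zero_le M) hmM
    exact_mod_cast this
  have hMpos : (0:ℝ) < M := by exact_mod_cast hM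
  have hMn : (0:ℝ) < ((M:ℝ)^n)^2 := by positivity
  have hcardF : (Fintype.card ((Fin n → Fin M) × (Fin n → Fin M)) : ℝ) = ((M:ℝ)^n)^2 := by
    simp [sq]
  have hI : (Fintype.card ((Fin n → Fin M) × (Fin n → Fin M)) : ℝ)⁻¹ *
      ∑ ω : (Fin n → Fin M) × (Fin n → Fin M),
        ∑ j : Fin M, (min (typeCount ω.1 j) (typeCount ω.2 j) : ℝ) ≤ n := by
    rw [hcardF, inv_mul_eq_div, div_le_iff₀ hMn]
    calc _ ≤ ((M:ℝ)^n)^2 * n := sum_min_upper M n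
      _ = (n:ℝ) * ((M:ℝ)^n)^2 := by ring
  rw [Texp_eq, div_le_one hm0]
  linarith [hncast, hI]

lemma sqrt_tendsto_atTop : Tendsto Real.sqrt atTop atTop :=
  tendsto_atTop_atTop_of_monotone (fun _ _ h => Real.sqrt_le_sqrt h)
    (fun b => ⟨b^2, by rw [Real.sqrt_sq_eq_abs]; exact le_abs_self b⟩)

end Aux

theorem overlap_proportion_lower_bound (m M : ℕ) (hM : 1 ≤ M) (hmM : M < m) :
    Texp m M ≥ 1 - Real.sqrt (2 * ((m : ℝ) - M) * ((M : ℝ) - 1)) / (2 * m) ∧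
    Tendsto (fun m' => Texp m' M) atTop (nhds 1) := by
  constructor
  · exact Texp_lb m M hM hmM
  · have hg : Tendsto (fun m' : ℕ => 1 - Real.sqrt (2 * ((M:ℝ) - 1)) / (2 * Real.sqrt m'))
        atTop (nhds 1) := by
      have h1 : Tendsto (fun m' : ℕ => (2:ℝ) * Real.sqrt m') atTop atTop :=
        (sqrt_tendsto_atTop.comp tendsto_natCast_atTop_atTop).const_mul_atTop two_pos
      have h2 : Tendsto (fun m' : ℕ => Real.sqrt (2 * ((M:ℝ) - 1)) / (2 * Real.sqrt m'))
          atTop (nhds 0) := Tendsto.div_atTop tendsto_const_nhds h1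
      have h0 : Tendsto (fun _ : ℕ => (1:ℝ)) atTop (nhds 1) := tendsto_const_nhds
      simpa using h0.sub h2
    refine tendsto_of_tendsto_of_tendsto_of_le_of_le' hg tendsto_const_nhds ?_ ?_
    · filter_upwards [eventually_ge_atTop (M + 1)] with m' hm'
      have hmM' : M < m' := hm'
      have hm'0 : (0:ℝ) < m' := by
        have : 0 < m' := lt_of_le_of_lt (Nat.zero_le M) hmM'
        exact_mod_cast this
      have hs : (0:ℝ) < Real.sqrt m' := Real.sqrt_pos.mpr hm'0
      have hss : Real.sqrt m' * Real.sqrt m' = (m':ℝ) := Real.mul_self_sqrt hm'0.le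
      have hM1 : (1:ℝ) ≤ M := by exact_mod_cast hM
      have hmge : (M:ℝ) ≤ m' := by exact_mod_cast hmM'.le
      have step1 : Real.sqrt (2 * ((m':ℝ) - M) * ((M:ℝ) - 1))
          ≤ Real.sqrt ((m':ℝ) * (2 * ((M:ℝ) - 1))) := by
        apply Real.sqrt_le_sqrt
        nlinarith
      have step2 : Real.sqrt ((m':ℝ) * (2 * ((M:ℝ) - 1)))
          = Real.sqrt m' * Real.sqrt (2 * ((M:ℝ) - 1)) :=
        Real.sqrt_mul hm'0.le _
      have gen : ∀ a c : ℝ, 0 < a → a * c / (2 * (a * a)) = c / (2 * a) := by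
        intro a c ha
        field_simp
      have step3 : Real.sqrt m' * Real.sqrt (2 * ((M:ℝ) - 1)) / (2 * m')
          = Real.sqrt (2 * ((M:ℝ) - 1)) / (2 * Real.sqrt m') := by
        have h := gen (Real.sqrt m') (Real.sqrt (2 * ((M:ℝ) - 1))) hs
        rwa [hss] at h
      have hb : Real.sqrt (2 * ((m':ℝ) - M) * ((M:ℝ) - 1)) / (2 * m')
          ≤ Real.sqrt (2 * ((M:ℝ) - 1)) / (2 * Real.sqrt m') := by
        rw [← step3, ← step2]
        exact (div_le_div_iff_of_pos_right (by positivity)).mpr step1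
      have := Texp_lb m' M hM hmM'
      linarith
    · filter_upwards [eventually_ge_atTop (M + 1)] with m' hm'
      exact Texp_ub m' M hM hm'
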